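/- arXiv:2509.24243 — 7 statements merged into one kernel-verified Lean document; each statement's English description precedes it below -/
import Mathlib

section
/- If x : ℝ → ℝ is differentiable and satisfies the differential inequality x'(t) ≥ -ε · sgn(x(t)) · |x(t)|^ρ for all t ≥ 0, with constants ε > 0 and ρ ∈ [0,1), and x(0) ≥ 0, then x(t) ≥ 0 for all t ≥ 0. -/
theorem stmt0 (ε ρ : ℝ) (hε : 0 < ε) (hρ0 : 0 ≤ ρ) (hρ1 : ρ < 1)
    (x : ℝ → ℝ) (hx : Differentiable ℝ x)
    (hineq : ∀ t ≥ (0:ℝ), deriv x t ≥ -ε * Real.sign (x t) * |x t| ^ ρ)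
    (h0 : x 0 ≥ 0) :
    ∀ t ≥ (0:ℝ), x t ≥ 0 := by
  intro t₁ ht₁
  by_contra hneg
  push_neg at hneg
  set S : Set ℝ := {t | t ∈ Set.Icc (0:ℝ) t₁ ∧ 0 ≤ x t} with hS
  have hSne : S.Nonempty := ⟨0, ⟨le_refl 0, ht₁⟩, h0⟩
  have hSbdd : BddAbove S := ⟨t₁, fun t ht => ht.1.2⟩
  have hSclosed : IsClosed S := by
    have : S = Set.Icc 0 t₁ ∩ x ⁻¹' Set.Ici 0 := by
      ext t; simp [hS, Set.mem_Icc, and_assoc]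
    rw [this]
    exact isClosed_Icc.inter (isClosed_Ici.preimage hx.continuous)
  set s := sSup S with hs
  have hsS : s ∈ S := hSclosed.csSup_mem hSne hSbdd
  have hs0 : 0 ≤ s := hsS.1.1
  have hst : s ≤ t₁ := hsS.1.2
  have hxs : 0 ≤ x s := hsS.2
  have hslt : s < t₁ := hst.lt_of_ne (fun h => absurd hxs (by rw [h]; exact not_le.2 hneg))
  have hxneg : ∀ u ∈ Set.Ioo s t₁, x u < 0 := by
    intro u hu
    by_contra h
    push_neg at h
    have : u ∈ S := ⟨⟨hs0.trans hu.1.le, hu.2.le⟩, h⟩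
    exact absurd (le_csSup hSbdd this) (not_le.2 hu.1)
  have hmono : MonotoneOn x (Set.Icc s t₁) := by
    apply monotoneOn_of_deriv_nonneg (convex_Icc s t₁) hx.continuous.continuousOn
      (fun u _ => (hx u).differentiableWithinAt)
    intro u hu
    rw [interior_Icc] at hu
    have hxu : x u < 0 := hxneg u hu
    have hu0 : (0:ℝ) ≤ u := hs0.trans hu.1.le
    have := hineq u hu0
    rw [Real.sign_of_neg hxu] at this
    have hp : (0:ℝ) ≤ |x u| ^ ρ := Real.rpow_nonneg (abs_nonneg _) ρ
    nlinarith
  have := hmono (Set.left_mem_Icc.2 hst) (Set.right_mem_Icc.2 hst) hst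
  linarith
end

section
/- Let ρ ∈ (0,1) and ε > 0. If x : ℝ → ℝ is differentiable, x(0) < 0, and x'(t) ≥ ε · |x(t)|^ρ whenever x(t) < 0, then there exists T ≤ (-x(0))^(1-ρ) / (ε(1-ρ)) such that x(T) ≥ 0. -/
/-!
While `x < 0`, the condition `x' ≥ ε (-x)^ρ` makes `(-x)^(1-ρ)` decrease at rate at least
`ε (1-ρ)`. Starting from `(-x 0)^(1-ρ)`, it would therefore reach `0` no later than
`T = (-x 0)^(1-ρ) / (ε (1-ρ))`, which is impossible while `x` stays negative.
-/

open Set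

variable {x x' : ℝ → ℝ} {ε ρ a b : ℝ}

theorem hasDerivAt_neg_rpow_one_sub {t d : ℝ} (hx : HasDerivAt x d t) (ht : x t < 0) :
    HasDerivAt (fun s => (-x s) ^ (1 - ρ)) (-((1 - ρ) * (d * (-x t) ^ (-ρ)))) t := by
  convert hx.fun_neg.rpow_const (p := 1 - ρ) (Or.inl (neg_pos.2 ht).ne') using 1
  rw [sub_sub_cancel_left]
  ring

theorem le_mul_rpow_neg_of_mul_rpow_le {y d : ℝ} (hy : 0 < y) (h : ε * y ^ ρ ≤ d) :
    ε ≤ d * y ^ (-ρ) := by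
  rw [Real.rpow_neg hy.le, ← div_eq_mul_inv, le_div_iff₀ (Real.rpow_pos_of_pos hy ρ)]
  exact h

theorem neg_rpow_one_sub_add_le (hρ : ρ ≤ 1) (hab : a ≤ b) (hcont : ContinuousOn x (Icc a b))
    (hderiv : ∀ t ∈ Ioo a b, HasDerivAt x (x' t) t) (hneg : ∀ t ∈ Icc a b, x t < 0)
    (hcbf : ∀ t ∈ Ioo a b, ε * (-x t) ^ ρ ≤ x' t) :
    (-x b) ^ (1 - ρ) + ε * (1 - ρ) * (b - a) ≤ (-x a) ^ (1 - ρ) := by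
  have hV : ∀ t ∈ Ioo a b, HasDerivAt (fun s => (-x s) ^ (1 - ρ))
      (-((1 - ρ) * (x' t * (-x t) ^ (-ρ)))) t := fun t ht =>
    hasDerivAt_neg_rpow_one_sub (hderiv t ht) (hneg t (Ioo_subset_Icc_self ht))
  have hdecay : ∀ t ∈ interior (Icc a b), deriv (fun s => (-x s) ^ (1 - ρ)) t ≤ -(ε * (1 - ρ)) := by
    intro t ht
    rw [interior_Icc] at ht
    rw [(hV t ht).deriv, neg_le_neg_iff, mul_comm ε]
    exact mul_le_mul_of_nonneg_left
      (le_mul_rpow_neg_of_mul_rpow_le (neg_pos.2 (hneg t (Ioo_subset_Icc_self ht))) (hcbf t ht))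
      (sub_nonneg.2 hρ)
  have hVcont : ContinuousOn (fun s => (-x s) ^ (1 - ρ)) (Icc a b) :=
    hcont.neg.rpow_const fun t ht => Or.inl (neg_pos.2 (hneg t ht)).ne'
  have hVdiff : DifferentiableOn ℝ (fun s => (-x s) ^ (1 - ρ)) (interior (Icc a b)) := by
    rw [interior_Icc]
    exact fun t ht => (hV t ht).differentiableAt.differentiableWithinAt
  have := (convex_Icc a b).image_sub_le_mul_sub_of_deriv_le hVcont hVdiff hdecay
    a (left_mem_Icc.2 hab) b (right_mem_Icc.2 hab) hab
  linarith

theorem stmt1_general (ε ρ : ℝ) (hε : 0 < ε) (hρ1 : ρ < 1)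
    (x : ℝ → ℝ) (hx : Differentiable ℝ x) (h0 : x 0 < 0)
    (hineq : ∀ t ≥ (0:ℝ), x t < 0 → deriv x t ≥ ε * |x t| ^ ρ) :
    ∃ T : ℝ, 0 ≤ T ∧ T ≤ (-(x 0)) ^ (1 - ρ) / (ε * (1 - ρ)) ∧ x T ≥ 0 := by
  set T := (-(x 0)) ^ (1 - ρ) / (ε * (1 - ρ)) with hT_def
  have hc : 0 < 1 - ρ := sub_pos.2 hρ1
  have hT : 0 ≤ T := div_nonneg (Real.rpow_nonneg (neg_nonneg.2 h0.le) _) (by positivity)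
  by_contra! hneg
  have hcbf : ∀ t ∈ Ioo 0 T, ε * (-x t) ^ ρ ≤ deriv x t := fun t ht => by
    have hxt := hneg t ht.1.le ht.2.le
    simpa only [abs_of_neg hxt] using hineq t ht.1.le hxt
  have hbound := neg_rpow_one_sub_add_le hρ1.le hT hx.continuous.continuousOn
    (fun t _ => (hx t).hasDerivAt) (fun t ht => hneg t ht.1 ht.2) hcbf
  have hdrop : ε * (1 - ρ) * T = (-(x 0)) ^ (1 - ρ) := by
    rw [hT_def]
    field_simp
  have hpos : 0 < (-x T) ^ (1 - ρ) := Real.rpow_pos_of_pos (neg_pos.2 (hneg T hT le_rfl)) _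
  linarith

theorem stmt1 (ε ρ : ℝ) (hε : 0 < ε) (hρ0 : 0 < ρ) (hρ1 : ρ < 1)
    (x : ℝ → ℝ) (hx : Differentiable ℝ x) (h0 : x 0 < 0)
    (hineq : ∀ t ≥ (0:ℝ), x t < 0 → deriv x t ≥ ε * |x t| ^ ρ) :
    ∃ T : ℝ, 0 ≤ T ∧ T ≤ (-(x 0)) ^ (1 - ρ) / (ε * (1 - ρ)) ∧ x T ≥ 0 :=
  stmt1_general ε ρ hε hρ1 x hx h0 hineq
end

section
/- Let ρ ∈ (0,1), ε > 0, and let x : ℝ → ℝ be differentiable with x'(t) ≥ -ε · sgn(x(t)) · |x(t)|^ρ for all t ≥ t_w, where t_w ≥ 0. Then for any initial value x(t_w) ∈ ℝ, we have x(t) ≥ 0 for all t ≥ t_w + max(0, -x(t_w))^(1-ρ)/(ε(1-ρ)). -/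
open Set

/- If `x b < 0`, then `x` is monotone on `[s, b]`, where `s` is the last time in `[a, b]`
with `0 ≤ x s`. -/
theorem nonneg_of_deriv_nonneg_of_neg {x : ℝ → ℝ} {a : ℝ} (hx : Differentiable ℝ x)
    (hderiv : ∀ t ≥ a, x t < 0 → 0 ≤ deriv x t) (ha : 0 ≤ x a) : ∀ b ≥ a, 0 ≤ x b := by
  intro b hab
  by_contra! hb
  set S := Icc a b ∩ {u | 0 ≤ x u}
  have hS : IsCompact S := isCompact_Icc.inter_right (isClosed_le continuous_const hx.continuous)
  obtain ⟨⟨has, hsb⟩, hxs : 0 ≤ x (sSup S)⟩ : sSup S ∈ S := hS.sSup_mem ⟨a, ⟨le_rfl, hab⟩, ha⟩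
  have hneg : ∀ u ∈ Ioo (sSup S) b, x u < 0 := fun u hu ↦ by
    by_contra! hxu
    exact hu.1.not_ge (le_csSup hS.bddAbove ⟨⟨has.trans hu.1.le, hu.2.le⟩, hxu⟩)
  have hmono : MonotoneOn x (Icc (sSup S) b) := by
    refine monotoneOn_of_deriv_nonneg (convex_Icc _ _) hx.continuous.continuousOn
      hx.differentiableOn fun u hu ↦ ?_
    rw [interior_Icc] at hu
    exact hderiv u (has.trans hu.1.le) (hneg u hu)
  linarith [hmono ⟨le_rfl, hsb⟩ ⟨hsb, le_rfl⟩ hsb]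

theorem deriv_neg_rpow_le {x : ℝ → ℝ} {ε ρ t : ℝ} (hρ : ρ < 1) (hd : DifferentiableAt ℝ x t)
    (hxt : x t < 0) (hbound : ε * (-x t) ^ ρ ≤ deriv x t) :
    deriv (fun u ↦ (-x u) ^ (1 - ρ)) t ≤ -(ε * (1 - ρ)) := by
  have hpos : 0 < -x t := neg_pos.mpr hxt
  rw [(hd.hasDerivAt.fun_neg.rpow_const (Or.inl hpos.ne')).deriv,
    show 1 - ρ - 1 = -ρ by ring, Real.rpow_neg hpos.le]
  have h1ρ : 0 ≤ 1 - ρ := by linarith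
  calc -deriv x t * (1 - ρ) * ((-x t) ^ ρ)⁻¹
      ≤ -(ε * (-x t) ^ ρ) * (1 - ρ) * ((-x t) ^ ρ)⁻¹ := by gcongr
    _ = -(ε * (1 - ρ)) := by field_simp

/- While `x < 0`, the positive quantity `(-x)^(1-ρ)` decreases at rate at least `ε (1 - ρ)`,
so it cannot stay positive for a time longer than `(-x a)^(1-ρ) / (ε (1 - ρ))`. -/
theorem exists_mem_Icc_nonneg_of_rpow_le_deriv {x : ℝ → ℝ} {ε ρ a b : ℝ} (hρ : ρ < 1)
    (hx : Differentiable ℝ x) (hab : a ≤ b)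
    (hderiv : ∀ t ∈ Icc a b, x t < 0 → ε * (-x t) ^ ρ ≤ deriv x t)
    (htime : (-x a) ^ (1 - ρ) ≤ ε * (1 - ρ) * (b - a)) : ∃ t ∈ Icc a b, 0 ≤ x t := by
  by_contra! hneg
  have hdiff : ∀ t ∈ Icc a b, DifferentiableAt ℝ (fun u ↦ (-x u) ^ (1 - ρ)) t := fun t ht ↦
    ((hx t).fun_neg.rpow_const (Or.inl (neg_pos.mpr (hneg t ht)).ne'))
  have hdecr := (convex_Icc a b).image_sub_le_mul_sub_of_deriv_le
    (fun t ht ↦ (hdiff t ht).continuousAt.continuousWithinAt)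
    (fun t ht ↦ (hdiff t (interior_subset ht)).differentiableWithinAt)
    (fun t ht ↦ deriv_neg_rpow_le hρ (hx t) (hneg t (interior_subset ht))
      (hderiv t (interior_subset ht) (hneg t (interior_subset ht))))
    a ⟨le_rfl, hab⟩ b ⟨hab, le_rfl⟩ hab
  have hb : 0 < (-x b) ^ (1 - ρ) := Real.rpow_pos_of_pos (neg_pos.mpr (hneg b ⟨hab, le_rfl⟩)) _
  linarith

theorem stmt2_general (ε ρ tw : ℝ) (hε : 0 < ε) (hρ1 : ρ < 1)
    (x : ℝ → ℝ) (hx : Differentiable ℝ x)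
    (hineq : ∀ t ≥ tw, deriv x t ≥ -ε * Real.sign (x t) * |x t| ^ ρ) :
    ∀ t ≥ tw + (max 0 (-(x tw))) ^ (1 - ρ) / (ε * (1 - ρ)), x t ≥ 0 := by
  intro t ht
  set T := tw + (max 0 (-(x tw))) ^ (1 - ρ) / (ε * (1 - ρ))
  have hρ : 0 < 1 - ρ := by linarith
  have hT : tw ≤ T := le_add_of_nonneg_right (by positivity)
  have hneg : ∀ u ≥ tw, x u < 0 → ε * (-x u) ^ ρ ≤ deriv x u := fun u hu hxu ↦ by
    have := hineq u hu
    rw [Real.sign_of_neg hxu, abs_of_neg hxu] at this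
    linarith
  obtain ⟨t₁, ht₁, hx₁⟩ : ∃ t₁ ∈ Icc tw T, 0 ≤ x t₁ := by
    rcases le_or_gt 0 (x tw) with h | h
    · exact ⟨tw, ⟨le_rfl, hT⟩, h⟩
    · refine exists_mem_Icc_nonneg_of_rpow_le_deriv hρ1 hx hT (fun u hu ↦ hneg u hu.1) ?_
      rw [add_sub_cancel_left, max_eq_right (by linarith), mul_div_cancel₀ _ (by positivity)]
  exact nonneg_of_deriv_nonneg_of_neg hx
    (fun u hu hxu ↦ (mul_nonneg hε.le (Real.rpow_nonneg (neg_nonneg.mpr hxu.le) ρ)).trans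
      (hneg u (ht₁.1.trans hu) hxu))
    hx₁ t (ht₁.2.trans ht)

theorem stmt2 (ε ρ tw : ℝ) (hε : 0 < ε) (hρ0 : 0 < ρ) (hρ1 : ρ < 1) (htw : 0 ≤ tw)
    (x : ℝ → ℝ) (hx : Differentiable ℝ x)
    (hineq : ∀ t ≥ tw, deriv x t ≥ -ε * Real.sign (x t) * |x t| ^ ρ) :
    ∀ t ≥ tw + (max 0 (-(x tw))) ^ (1 - ρ) / (ε * (1 - ρ)), x t ≥ 0 :=
  stmt2_general ε ρ tw hε hρ1 x hx hineq
end

section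
/- Let α ≥ 1 and let e : [0,1] → ℝ be differentiable with e'(t) = -α e(t) + r(t), where |r(t)| ≤ K(1-t) for some constant K ≥ 0. Then |e(t)| ≤ |e(0)| e^{-αt} + K(1-t)/α + (K/α²)(1 - e^{-αt}) for all t ∈ [0,1]. -/
/-!
Multiplying by the integrating factor `exp (α t)` turns the equation into
`(e t * exp (α t))' = r t * exp (α t)`, whose right-hand side is bounded by
`K (1 - t) exp (α t)`, the derivative of `K ((1 - t) / α + 1 / α²) exp (α t)`.
Hence `|e t| exp (α t)` is at most `|e 0|` plus the increment of this antiderivative;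
multiplying back by `exp (-α t)` and dropping the term `-K exp (-α t) / α ≤ 0` gives the estimate.
-/

open Real Set

lemma abs_le_abs_add_sub_of_abs_deriv_le {f f' g g' : ℝ → ℝ} {a b : ℝ}
    (hf : ∀ t ∈ Icc a b, HasDerivAt f (f' t) t) (hg : ∀ t ∈ Icc a b, HasDerivAt g (g' t) t)
    (bound : ∀ t ∈ Icc a b, |f' t| ≤ g' t) :
    ∀ t ∈ Icc a b, |f t| ≤ |f a| + (g t - g a) :=
  image_norm_le_of_norm_deriv_right_le_deriv_boundary'
    (fun t ht => (hf t ht).continuousAt.continuousWithinAt)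
    (fun t ht => (hf t (Ico_subset_Icc_self ht)).hasDerivWithinAt) (by simp)
    (fun t ht => (((hg t ht).sub_const (g a)).const_add _).continuousAt.continuousWithinAt)
    (fun t ht => (((hg t (Ico_subset_Icc_self ht)).sub_const (g a)).const_add _).hasDerivWithinAt)
    (fun t ht => bound t (Ico_subset_Icc_self ht))

lemma hasDerivAt_mul_exp_of_hasDerivAt {e : ℝ → ℝ} {α r t : ℝ}
    (he : HasDerivAt e (-α * e t + r) t) :
    HasDerivAt (fun s => e s * exp (α * s)) (r * exp (α * t)) t :=
  (he.mul ((hasDerivAt_id t).const_mul α).exp).congr_deriv (by simp only [id]; ring)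

lemma hasDerivAt_antideriv_one_sub_mul_exp {α : ℝ} (hα : α ≠ 0) (t : ℝ) :
    HasDerivAt (fun s => ((1 - s) / α + 1 / α ^ 2) * exp (α * s))
      ((1 - t) * exp (α * t)) t := by
  have hlin : HasDerivAt (fun s => (1 - s) / α + 1 / α ^ 2) (-1 / α) t := by
    simpa using (((hasDerivAt_id t).const_sub 1).div_const α).add_const (1 / α ^ 2)
  exact (hlin.mul ((hasDerivAt_id t).const_mul α).exp).congr_deriv
    (by simp only [id]; field_simp; ring)

theorem stmt4 (α K : ℝ) (hα : 1 ≤ α) (hK : 0 ≤ K) (e r : ℝ → ℝ)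
    (hode : ∀ t ∈ Set.Icc (0:ℝ) 1, HasDerivAt e (-α * e t + r t) t)
    (hr : ∀ t ∈ Set.Icc (0:ℝ) 1, |r t| ≤ K * (1 - t)) :
    ∀ t ∈ Set.Icc (0:ℝ) 1,
      |e t| ≤ |e 0| * Real.exp (-α * t) + K * (1 - t) / α
              + (K / α ^ 2) * (1 - Real.exp (-α * t)) := by
  have hα0 : 0 < α := one_pos.trans_le hα
  set G : ℝ → ℝ := fun s => ((1 - s) / α + 1 / α ^ 2) * exp (α * s)
  have hψ : ∀ t ∈ Icc (0:ℝ) 1,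
      |e t * exp (α * t)| ≤ |e 0 * exp (α * 0)| + (K * G t - K * G 0) :=
    abs_le_abs_add_sub_of_abs_deriv_le
      (fun t ht => hasDerivAt_mul_exp_of_hasDerivAt (hode t ht))
      (fun t _ => (hasDerivAt_antideriv_one_sub_mul_exp hα0.ne' t).const_mul K)
      (fun t ht => by
        rw [abs_mul, abs_of_pos (exp_pos _), ← mul_assoc]
        exact mul_le_mul_of_nonneg_right (hr t ht) (exp_pos _).le)
  intro t ht
  have hinv : exp (α * t) * exp (-α * t) = 1 := by rw [← exp_add]; simp
  calc |e t| = |e t * exp (α * t)| * exp (-α * t) := by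
        rw [abs_mul, abs_of_pos (exp_pos _), mul_assoc, hinv, mul_one]
    _ ≤ (|e 0| + (K * G t - K * G 0)) * exp (-α * t) := by
        gcongr
        simpa only [mul_zero, exp_zero, mul_one] using hψ t ht
    _ = |e 0| * exp (-α * t) + K * (1 - t) / α + (K / α ^ 2) * (1 - exp (-α * t))
          - K * exp (-α * t) / α := by
        simp only [G, mul_zero, exp_zero]
        linear_combination (K * ((1 - t) / α + 1 / α ^ 2)) * hinv
    _ ≤ _ := by
        have : 0 ≤ K * exp (-α * t) / α := by positivity
        linarith
end

section
/- Let b : ℝ^d → ℝ be continuously differentiable and let x : [0,1] → ℝ^d be a solution of x'(t) = u(t) where u is continuous. If for all t ∈ [0,1], ∇b(x(t))ᵀu(t) + ε·sgn(b(x(t)) - δ)·|b(x(t)) - δ|^ρ ≥ 0 with ε > 0, ρ ∈ (0,1), δ > 0, and b(x(0)) ≥ δ, then b(x(t)) ≥ δ for all t ∈ [0,1]. -/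
/-! Along the trajectory, `g t = b (x t) - δ` has derivative `⟪∇b (x t), u t⟫`, and the barrier
condition makes this derivative at least `ε |g t| ^ ρ ≥ 0` wherever `g t < 0`. A continuous
function that starts nonnegative and is nondecreasing wherever it is negative stays nonnegative:
after its last zero before a negative value it would be nondecreasing, hence nonnegative. -/

open Set
open scoped RealInnerProductSpace

theorem nonneg_of_deriv_nonneg_of_neg_s12 {g g' : ℝ → ℝ} {a c : ℝ}
    (hcont : ContinuousOn g (Icc a c)) (hderiv : ∀ t ∈ Ioo a c, HasDerivAt g (g' t) t)
    (ha : 0 ≤ g a) (hg' : ∀ t ∈ Ioo a c, g t < 0 → 0 ≤ g' t) :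
    ∀ t ∈ Icc a c, 0 ≤ g t := by
  intro t ht
  by_contra! hgt
  set S := Icc a t ∩ g ⁻¹' Ici 0
  have hS_closed : IsClosed S :=
    (hcont.mono (Icc_subset_Icc_right ht.2)).preimage_isClosed_of_isClosed isClosed_Icc isClosed_Ici
  have hS_bdd : BddAbove S := ⟨t, fun s hs => hs.1.2⟩
  have haS : a ∈ S := ⟨left_mem_Icc.2 ht.1, ha⟩
  set s₀ := sSup S
  have hs₀S : s₀ ∈ S := hS_closed.csSup_mem ⟨a, haS⟩ hS_bdd
  have has₀ : a ≤ s₀ := le_csSup hS_bdd haS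
  have hs₀t : s₀ < t := lt_of_le_of_ne hs₀S.1.2 fun h => (h ▸ hs₀S.2 : 0 ≤ g t).not_gt hgt
  have hneg : ∀ r ∈ Ioc s₀ t, g r < 0 := fun r hr => by
    by_contra! hr0
    exact (le_csSup hS_bdd ⟨⟨has₀.trans hr.1.le, hr.2⟩, hr0⟩).not_gt hr.1
  have hsub : Ioo s₀ t ⊆ Ioo a c := Ioo_subset_Ioo has₀ ht.2
  have hmono : MonotoneOn g (Icc s₀ t) := by
    refine monotoneOn_of_deriv_nonneg (convex_Icc s₀ t)
      (hcont.mono (Icc_subset_Icc has₀ ht.2)) ?_ ?_ <;> rw [interior_Icc]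
    · exact fun r hr => (hderiv r (hsub hr)).differentiableAt.differentiableWithinAt
    · intro r hr
      rw [(hderiv r (hsub hr)).deriv]
      exact hg' r (hsub hr) (hneg r ⟨hr.1, hr.2.le⟩)
  have := hmono (left_mem_Icc.2 hs₀t.le) (right_mem_Icc.2 hs₀t.le) hs₀t.le
  exact hgt.not_ge (hs₀S.2.trans this)

theorem HasGradientAt.comp_hasDerivAt {F : Type*} [NormedAddCommGroup F]
    [InnerProductSpace ℝ F] [CompleteSpace F] {b : F → ℝ} {x : ℝ → F} {g v : F} {t : ℝ}
    (hb : HasGradientAt b g (x t)) (hx : HasDerivAt x v t) :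
    HasDerivAt (fun s => b (x s)) ⟪g, v⟫ t := by
  have h := hb.hasFDerivAt.comp_hasDerivAt t hx
  rw [InnerProductSpace.toDual_apply_apply] at h
  exact h

theorem stmt12_general (d : ℕ) (b : EuclideanSpace ℝ (Fin d) → ℝ) (hb : ContDiff ℝ 1 b)
    (x : ℝ → EuclideanSpace ℝ (Fin d)) (u : ℝ → EuclideanSpace ℝ (Fin d))
    (hx : ∀ t ∈ Set.Icc (0:ℝ) 1, HasDerivAt x (u t) t)
    (ε ρ δ : ℝ) (hε : 0 < ε)
    (hcbf : ∀ t ∈ Set.Icc (0:ℝ) 1,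
      ⟪gradient b (x t), u t⟫ + ε * Real.sign (b (x t) - δ) * |b (x t) - δ| ^ ρ ≥ 0)
    (h0 : b (x 0) ≥ δ) :
    ∀ t ∈ Set.Icc (0:ℝ) 1, b (x t) ≥ δ := by
  have hderiv : ∀ t ∈ Icc (0:ℝ) 1,
      HasDerivAt (fun s => b (x s) - δ) ⟪gradient b (x t), u t⟫ t := fun t ht =>
    (((hb.differentiable one_ne_zero) _).hasGradientAt.comp_hasDerivAt (hx t ht)).sub_const δ
  have hneg : ∀ t ∈ Ioo (0:ℝ) 1, b (x t) - δ < 0 → 0 ≤ ⟪gradient b (x t), u t⟫ := by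
    intro t ht hlt
    have hcbf_t := hcbf t (Ioo_subset_Icc_self ht)
    rw [Real.sign_of_neg hlt] at hcbf_t
    nlinarith [Real.rpow_nonneg (abs_nonneg (b (x t) - δ)) ρ]
  intro t ht
  exact sub_nonneg.1 <| nonneg_of_deriv_nonneg_of_neg_s12
    (fun s hs => (hderiv s hs).continuousAt.continuousWithinAt)
    (fun s hs => hderiv s (Ioo_subset_Icc_self hs)) (sub_nonneg.2 h0) hneg t ht

theorem stmt12 (d : ℕ) (b : EuclideanSpace ℝ (Fin d) → ℝ) (hb : ContDiff ℝ 1 b)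
    (x : ℝ → EuclideanSpace ℝ (Fin d)) (u : ℝ → EuclideanSpace ℝ (Fin d))
    (hu : Continuous u)
    (hx : ∀ t ∈ Set.Icc (0:ℝ) 1, HasDerivAt x (u t) t)
    (ε ρ δ : ℝ) (hε : 0 < ε) (hρ0 : 0 < ρ) (hρ1 : ρ < 1) (hδ : 0 < δ)
    (hcbf : ∀ t ∈ Set.Icc (0:ℝ) 1,
      ⟪gradient b (x t), u t⟫ + ε * Real.sign (b (x t) - δ) * |b (x t) - δ| ^ ρ ≥ 0)
    (h0 : b (x 0) ≥ δ) :
    ∀ t ∈ Set.Icc (0:ℝ) 1, b (x t) ≥ δ :=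
  stmt12_general d b hb x u hx ε ρ δ hε hcbf h0
end

section
/- Let ρ ∈ (0,1), ε > 0, δ > 0, t_w ∈ [0,1), and let h : [0,1] → ℝ be differentiable with h'(t) ≥ ε(δ - h(t))^ρ whenever h(t) < δ and t ≥ t_w. If h(t_w) < δ, then h(T) ≥ δ for T = t_w + (δ - h(t_w))^{1-ρ}/(ε(1-ρ)), provided T ≤ 1. -/
theorem stmt13 (ε ρ δ tw : ℝ) (hε : 0 < ε) (hρ0 : 0 < ρ) (hρ1 : ρ < 1) (hδ : 0 < δ)
    (htw : tw ∈ Set.Ico (0:ℝ) 1)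
    (h : ℝ → ℝ) (hdiff : Differentiable ℝ h)
    (hineq : ∀ t, tw ≤ t → h t < δ → deriv h t ≥ ε * (δ - h t) ^ ρ)
    (hstart : h tw < δ)
    (T : ℝ) (hT : T = tw + (δ - h tw) ^ (1 - ρ) / (ε * (1 - ρ)))
    (hT1 : T ≤ 1) :
    h T ≥ δ := by
  have h1ρ : 0 < 1 - ρ := by linarith
  have hεEnglish : 0 < ε * (1 - ρ) := mul_pos hε h1ρ
  have hVtw : 0 < (δ - h tw) ^ (1 - ρ) := Real.rpow_pos_of_pos (by linarith) _
  have htwT : tw < T := by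
    rw [hT]
    have : 0 < (δ - h tw) ^ (1 - ρ) / (ε * (1 - ρ)) := div_pos hVtw hεEnglish
    linarith
  by_contra hcon
  push_neg at hcon
  by_cases hc : ∃ s ∈ Set.Icc tw T, δ ≤ h s
  · -- Case 2: h reaches δ before T; last crossing argument
    obtain ⟨s, hsmem, hs⟩ := hc
    set S : Set ℝ := {t ∈ Set.Icc tw T | δ ≤ h t} with hS
    have hne : S.Nonempty := ⟨s, hsmem, hs⟩
    have hbdd : BddAbove S := ⟨T, fun x hx => hx.1.2⟩
    set u := sSup S with hu
    have huT : u ≤ T := csSup_le hne fun x hx => hx.1.2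
    have htwu : tw ≤ u := le_trans hsmem.1 (le_csSup hbdd ⟨hsmem, hs⟩)
    have hδu : δ ≤ h u := by
      have hclosed : IsClosed {t : ℝ | δ ≤ h t} :=
        isClosed_le continuous_const hdiff.continuous
      have : u ∈ closure S := csSup_mem_closure hne hbdd
      have : u ∈ {t : ℝ | δ ≤ h t} :=
        hclosed.closure_subset (closure_mono (fun x hx => hx.2) this)
      exact this
    have hmono : MonotoneOn h (Set.Icc u T) := by
      apply monotoneOn_of_deriv_nonneg (convex_Icc u T) hdiff.continuous.continuousOn
        (fun x _ => hdiff.differentiableAt.differentiableWithinAt)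
      intro x hx
      rw [interior_Icc] at hx
      have hxlt : h x < δ := by
        by_contra hge
        push_neg at hge
        have : x ≤ u := le_csSup hbdd ⟨⟨le_trans htwu hx.1.le, hx.2.le⟩, hge⟩
        linarith [hx.1]
      have := hineq x (le_trans htwu hx.1.le) hxlt
      have : 0 ≤ ε * (δ - h x) ^ ρ :=
        mul_nonneg hε.le (Real.rpow_nonneg (by linarith) _)
      linarith [hineq x (le_trans htwu hx.1.le) hxlt]
    have := hmono (Set.left_mem_Icc.2 huT) (Set.right_mem_Icc.2 huT) huT
    linarith
  · -- Case 1: h stays below δ on [tw, T]; barrier function argument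
    push_neg at hc
    set g : ℝ → ℝ := fun t => (δ - h t) ^ (1 - ρ) + ε * (1 - ρ) * t with hg
    have hanti : AntitoneOn g (Set.Icc tw T) := by
      apply antitoneOn_of_deriv_nonpos (convex_Icc tw T)
      · apply ContinuousOn.add
        · apply ContinuousOn.rpow_const
          · exact (continuous_const.sub hdiff.continuous).continuousOn
          · intro x _; exact Or.inr h1ρ.le
        · exact (continuous_const.mul continuous_id).continuousOn
      · intro x hx
        rw [interior_Icc] at hx
        have hxlt : h x < δ := hc x ⟨hx.1.le, hx.2.le⟩
        have hpos : 0 < δ - h x := by linarith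
        have hd1 : HasDerivAt (fun t => δ - h t) (-(deriv h x)) x := by
          simpa using (hdiff x).hasDerivAt.const_sub δ
        have hd2 : HasDerivAt (fun t => (δ - h t) ^ (1 - ρ))
            (-(deriv h x) * (1 - ρ) * (δ - h x) ^ (1 - ρ - 1)) x :=
          hd1.rpow_const (Or.inl (ne_of_gt hpos))
        exact (hd2.add ((hasDerivAt_id x).const_mul (ε * (1 - ρ)))).differentiableAt.differentiableWithinAt
      · intro x hx
        rw [interior_Icc] at hx
        have hxlt : h x < δ := hc x ⟨hx.1.le, hx.2.le⟩
        have hpos : 0 < δ - h x := by linarith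
        have hd1 : HasDerivAt (fun t => δ - h t) (-(deriv h x)) x := by
          simpa using (hdiff x).hasDerivAt.const_sub δ
        have hd2 : HasDerivAt (fun t => (δ - h t) ^ (1 - ρ))
            (-(deriv h x) * (1 - ρ) * (δ - h x) ^ (1 - ρ - 1)) x :=
          hd1.rpow_const (Or.inl (ne_of_gt hpos))
        have hdg : HasDerivAt g
            (-(deriv h x) * (1 - ρ) * (δ - h x) ^ (1 - ρ - 1) + ε * (1 - ρ) * 1) x := by
          exact hd2.add ((hasDerivAt_id x).const_mul (ε * (1 - ρ)))
        rw [hdg.deriv]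
        have hder := hineq x hx.1.le hxlt
        have hkey : ε * (1 - ρ) ≤ deriv h x * (1 - ρ) * (δ - h x) ^ (1 - ρ - 1) := by
          have h1 : (1 : ℝ) - ρ - 1 = -ρ := by ring
          rw [h1]
          have hmul : ε * (δ - h x) ^ ρ * (δ - h x) ^ (-ρ) ≤
              deriv h x * (δ - h x) ^ (-ρ) := by
            apply mul_le_mul_of_nonneg_right hder (Real.rpow_nonneg hpos.le _)
          have hcancel : (δ - h x) ^ ρ * (δ - h x) ^ (-ρ) = 1 := by
            rw [← Real.rpow_add hpos]; simp
          have hpexp : 0 ≤ (δ - h x) ^ (-ρ) := Real.rpow_nonneg hpos.le _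
          nlinarith [hmul, hcancel]
        nlinarith [hkey]
    have hle := hanti (Set.left_mem_Icc.2 htwT.le) (Set.right_mem_Icc.2 htwT.le) htwT.le
    have hgap : ε * (1 - ρ) * (T - tw) = (δ - h tw) ^ (1 - ρ) := by
      rw [hT]; field_simp; ring
    have hVT : 0 < (δ - h T) ^ (1 - ρ) := Real.rpow_pos_of_pos (by linarith) _
    have hle' : (δ - h T) ^ (1 - ρ) + ε * (1 - ρ) * T ≤
        (δ - h tw) ^ (1 - ρ) + ε * (1 - ρ) * tw := hle
    nlinarith [hle', hgap, hVT]
end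

section
/- Let b : ℝ^d → ℝ be C¹, and suppose x : [0,1] → ℝ^d solves x'(t) = u(t) with ∇b(x(t))ᵀu(t) + ε·sgn(b(x(t)) - δ)|b(x(t)) - δ|^ρ + w(t)·r(t) ≥ 0, where w : [0,1] → ℝ≥0 is monotonically decreasing with w(t) = 0 for all t ∈ [t_w, 1], r(t) ≥ 0, ε > 0, ρ ∈ (0,1), δ > 0, t_w ∈ [0,1). If b(x(t₀)) ≥ δ for some t₀ ≥ t_w, then b(x(t)) ≥ δ for all t ∈ [t₀, 1]. -/
/-!
Once `t ≥ t_w` the slack `w t * r t` vanishes, and where `b (x t) < δ` the term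
`ε * sign (b (x t) - δ) * |b (x t) - δ| ^ ρ` is nonpositive, so the CBF condition forces
`d/dt b (x t) = ⟪∇b (x t), u t⟫ ≥ 0` there. A function that cannot decrease while it is
below `δ` never falls below `δ`: after the last time it was `≥ δ` it would be monotone.
-/

open Set
open scoped RealInnerProductSpace

theorem HasGradientAt.hasDerivAt_comp {F : Type*} [NormedAddCommGroup F]
    [InnerProductSpace ℝ F] [CompleteSpace F] {f : F → ℝ} {f' : F} {γ : ℝ → F} {γ' : F}
    {t : ℝ} (hf : HasGradientAt f f' (γ t)) (hγ : HasDerivAt γ γ' t) :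
    HasDerivAt (f ∘ γ) ⟪f', γ'⟫ t := by
  simpa using (hasGradientAt_iff_hasFDerivAt.mp hf).comp_hasDerivAt t hγ

theorem le_image_of_deriv_nonneg_of_image_lt {f f' : ℝ → ℝ} {a b δ : ℝ}
    (hf : ContinuousOn f (Icc a b)) (hf' : ∀ t ∈ Ioo a b, HasDerivAt f (f' t) t)
    (hf'_nonneg : ∀ t ∈ Ioo a b, f t < δ → 0 ≤ f' t) (ha : δ ≤ f a) :
    ∀ t ∈ Icc a b, δ ≤ f t := by
  intro t ⟨hat, htb⟩
  by_contra! hft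
  have hsub : Icc a t ⊆ Icc a b := Icc_subset_Icc_right htb
  have hclosed : IsClosed (Icc a t ∩ f ⁻¹' Ici δ) :=
    (hf.mono hsub).preimage_isClosed_of_isClosed isClosed_Icc isClosed_Ici
  obtain ⟨s, ⟨⟨has, hst⟩, hfs⟩, hlast⟩ :=
    (isCompact_Icc.of_isClosed_subset hclosed inter_subset_left).exists_isGreatest
      ⟨a, ⟨left_mem_Icc.mpr hat, ha⟩⟩
  have hbelow : ∀ r ∈ Ioo s t, f r < δ := fun r ⟨hsr, hrt⟩ =>
    not_le.mp fun hfr => (hsr.trans_le (hlast ⟨⟨has.trans hsr.le, hrt.le⟩, hfr⟩)).false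
  have hmono : MonotoneOn f (Icc s t) := by
    have hsub' : Icc s t ⊆ Icc a b := Icc_subset_Icc has htb
    have hIoo : Ioo s t ⊆ Ioo a b := Ioo_subset_Ioo has htb
    refine monotoneOn_of_hasDerivWithinAt_nonneg (f' := f') (convex_Icc s t) (hf.mono hsub')
      ?_ ?_
    · rw [interior_Icc]
      exact fun r hr => (hf' r (hIoo hr)).hasDerivWithinAt
    · rw [interior_Icc]
      exact fun r hr => hf'_nonneg r (hIoo hr) (hbelow r hr)
  exact (hft.trans_le hfs).not_ge (hmono (left_mem_Icc.mpr hst) (right_mem_Icc.mpr hst) hst)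

theorem stmt18_general (d : ℕ) (b : EuclideanSpace ℝ (Fin d) → ℝ) (hb : ContDiff ℝ 1 b)
    (x : ℝ → EuclideanSpace ℝ (Fin d)) (u : ℝ → EuclideanSpace ℝ (Fin d))
    (w r : ℝ → ℝ) (ε ρ δ tw t₀ : ℝ)
    (hε : 0 < ε) (htw : tw ∈ Set.Ico (0:ℝ) 1)
    (hwzero : ∀ t ∈ Set.Icc tw (1:ℝ), w t = 0)
    (hx : ∀ t ∈ Set.Icc (0:ℝ) 1, HasDerivAt x (u t) t)
    (hcbf : ∀ t ∈ Set.Icc (0:ℝ) 1,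
      ⟪gradient b (x t), u t⟫ + ε * Real.sign (b (x t) - δ) * |b (x t) - δ| ^ ρ
        + w t * r t ≥ 0)
    (ht₀ : tw ≤ t₀)
    (h0 : b (x t₀) ≥ δ) :
    ∀ t ∈ Set.Icc t₀ (1:ℝ), b (x t) ≥ δ := by
  have hsub : Icc t₀ 1 ⊆ Icc 0 1 := Icc_subset_Icc_left (htw.1.trans ht₀)
  have hderiv : ∀ t ∈ Icc t₀ 1, HasDerivAt (b ∘ x) ⟪gradient b (x t), u t⟫ t := fun t ht =>
    ((hb.differentiable one_ne_zero) (x t)).hasGradientAt.hasDerivAt_comp (hx t (hsub ht))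
  refine le_image_of_deriv_nonneg_of_image_lt
    (fun t ht => (hderiv t ht).continuousAt.continuousWithinAt)
    (fun t ht => hderiv t (Ioo_subset_Icc_self ht)) ?_ h0
  intro t ht hlt
  have hcbf_t := hcbf t (hsub (Ioo_subset_Icc_self ht))
  rw [hwzero t ⟨ht₀.trans ht.1.le, ht.2.le⟩, Real.sign_of_neg (sub_neg.mpr hlt)] at hcbf_t
  have : 0 ≤ ε * |b (x t) - δ| ^ ρ := by positivity
  linarith

theorem stmt18 (d : ℕ) (b : EuclideanSpace ℝ (Fin d) → ℝ) (hb : ContDiff ℝ 1 b)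
    (x : ℝ → EuclideanSpace ℝ (Fin d)) (u : ℝ → EuclideanSpace ℝ (Fin d))
    (w r : ℝ → ℝ) (ε ρ δ tw t₀ : ℝ)
    (hε : 0 < ε) (hρ0 : 0 < ρ) (hρ1 : ρ < 1) (hδ : 0 < δ) (htw : tw ∈ Set.Ico (0:ℝ) 1)
    (hwpos : ∀ t, 0 ≤ w t) (hwmono : ∀ s t, s ≤ t → w t ≤ w s)
    (hwzero : ∀ t ∈ Set.Icc tw (1:ℝ), w t = 0)
    (hrpos : ∀ t, 0 ≤ r t)
    (hx : ∀ t ∈ Set.Icc (0:ℝ) 1, HasDerivAt x (u t) t)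
    (hcbf : ∀ t ∈ Set.Icc (0:ℝ) 1,
      ⟪gradient b (x t), u t⟫ + ε * Real.sign (b (x t) - δ) * |b (x t) - δ| ^ ρ
        + w t * r t ≥ 0)
    (ht₀ : tw ≤ t₀) (ht₀1 : t₀ ≤ 1)
    (h0 : b (x t₀) ≥ δ) :
    ∀ t ∈ Set.Icc t₀ (1:ℝ), b (x t) ≥ δ :=
  stmt18_general d b hb x u w r ε ρ δ tw t₀ hε htw hwzero hx hcbf ht₀ h0
end
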